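/- For every ε > 0 and constants 0 < c₁ ≤ c₂ there exist C and N₀ such that for all N ≥ N₀, all admissible Fermi radii k_F^σ, k_F^ν, and all p ∈ B_F(k_F^σ), q ∈ B_F(k_F^ν), the following holds. Let 𝔖_{q,p} = {k ∈ 2πℤ³ : |k|² + k·(q−p) = 0}. Then Σ_{k ∈ 2πℤ³, k ∉ 𝔖_{q,p}} ( 1 − 1[|p−k| > k_F^σ]·1[|q+k| > k_F^ν] ) / | |k|² + k·(q−p) | ≤ C·N^{1/3+ε}. -/

import Mathlib

/-!
Lemma 4.2 of the paper: for admissible Fermi radii and `p ∈ B_F(k_F^σ)`,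
`q ∈ B_F(k_F^ν)`, one has
`Σ_{k ∉ 𝔖_{q,p}} (1 − 1[|p−k|>k_F^σ]·1[|q+k|>k_F^ν]) / ||k|² + k·(q−p)| ≤ C N^{1/3+ε}`.
-/

open scoped RealInnerProductSpace

/-- The point `2πm` of the lattice `2πℤ³ ⊆ ℝ³`. -/
noncomputable def lat (m : Fin 3 → ℤ) : EuclideanSpace ℝ (Fin 3) :=
  (EuclideanSpace.equiv (Fin 3) ℝ).symm fun i => 2 * Real.pi * (m i : ℝ)

/-- `k_F` is an admissible Fermi radius at particle number `N`. -/
def AdmissibleRadius (N : ℕ) (c₁ c₂ kF : ℝ) : Prop :=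
  (∃ z : ℤ, kF ^ 2 = 4 * Real.pi ^ 2 * (z : ℝ)) ∧
    c₁ * (N : ℝ) ^ ((1 : ℝ) / 3) ≤ kF ∧ kF ≤ c₂ * (N : ℝ) ^ ((1 : ℝ) / 3)



lemma log_le_rpow {γ x : ℝ} (hγ : 0 < γ) (hx : 1 ≤ x) : Real.log x ≤ γ⁻¹ * x ^ γ := by
  have hx0 : 0 < x := lt_of_lt_of_le one_pos hx
  have h1 : Real.log (x ^ γ) ≤ x ^ γ - 1 := Real.log_le_sub_one_of_pos (Real.rpow_pos_of_pos hx0 _)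
  rw [Real.log_rpow hx0] at h1
  have h2 : γ * Real.log x ≤ x ^ γ := by linarith
  have h3 : Real.log x = γ⁻¹ * (γ * Real.log x) := by field_simp
  rw [h3]
  have : 0 ≤ γ⁻¹ := le_of_lt (by positivity)
  exact mul_le_mul_of_nonneg_left h2 this

lemma card_divisors_le_rpow {δ : ℝ} (hδ : 0 < δ) :
    ∃ C : ℝ, 1 ≤ C ∧ ∀ n : ℕ, n ≠ 0 → (n.divisors.card : ℝ) ≤ C * (n : ℝ) ^ δ := by
  set γ := δ / 2 with hγdef
  have hγ : 0 < γ := by positivity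
  set B : ℕ := ⌈(2:ℝ) ^ (1/γ)⌉₊ + 1 with hBdef
  have hB1 : 1 ≤ B := Nat.le_add_left 1 _
  -- property of large primes
  have hlarge : ∀ p : ℕ, B ≤ p → (2:ℝ) ≤ (p:ℝ) ^ γ := by
    intro p hp
    have h2B : (2:ℝ) ^ (1/γ) ≤ (p:ℝ) := by
      calc (2:ℝ) ^ (1/γ) ≤ (⌈(2:ℝ)^(1/γ)⌉₊ : ℝ) := Nat.le_ceil _
      _ ≤ (B:ℝ) := by exact_mod_cast Nat.le_succ _
      _ ≤ (p:ℝ) := by exact_mod_cast hp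
    have h0 : (0:ℝ) ≤ (2:ℝ) ^ (1/γ) := le_of_lt (Real.rpow_pos_of_pos two_pos _)
    have := Real.rpow_le_rpow h0 h2B (le_of_lt hγ)
    rwa [← Real.rpow_mul (by norm_num : (0:ℝ) ≤ 2), one_div, inv_mul_cancel₀ (ne_of_gt hγ),
      Real.rpow_one] at this
  set Cs : ℝ := ((B:ℝ)/(γ * Real.log 2) + 1) ^ B with hCs
  have hCs1 : 1 ≤ Cs := by
    have : (1:ℝ) ≤ (B:ℝ)/(γ * Real.log 2) + 1 := by
      have : 0 ≤ (B:ℝ)/(γ * Real.log 2) := by positivity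
      linarith
    calc (1:ℝ) = 1 ^ B := (one_pow B).symm
    _ ≤ _ := by exact pow_le_pow_left₀ (by norm_num) this B
  refine ⟨Cs, hCs1, ?_⟩
  intro n hn
  have hn1 : 1 ≤ n := Nat.one_le_iff_ne_zero.mpr hn
  have hnR : (1:ℝ) ≤ (n:ℝ) := by exact_mod_cast hn1
  -- d(n) as product
  rw [Nat.card_divisors hn]
  set S := n.primeFactors with hS
  set e : ℕ → ℕ := fun p => n.factorization p with he
  -- split
  rw [← Finset.prod_filter_mul_prod_filter_not S (fun p => p < B)]
  push_cast
  set S₁ := S.filter (fun p => p < B) with hS₁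
  set S₂ := S.filter (fun p => ¬ p < B) with hS₂
  -- large part
  have hlargeprod : (∏ p ∈ S₂, ((e p : ℝ) + 1)) ≤ (n:ℝ) ^ γ := by
    have hstep : ∀ p ∈ S₂, ((e p : ℝ) + 1) ≤ ((p:ℝ) ^ (e p : ℕ)) ^ γ := by
      intro p hp
      obtain ⟨hpS, hpB⟩ := Finset.mem_filter.mp hp
      have hpB' : B ≤ p := le_of_not_gt hpB
      have h2p : (2:ℝ) ≤ (p:ℝ) ^ γ := hlarge p hpB'
      have h1 : ((e p : ℝ) + 1) ≤ (2:ℝ) ^ (e p) := by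
        exact_mod_cast Nat.lt_two_pow_self (n := e p)
      calc ((e p : ℝ) + 1) ≤ (2:ℝ) ^ (e p) := h1
      _ ≤ ((p:ℝ) ^ γ) ^ (e p) := by
          apply pow_le_pow_left₀ (by norm_num) h2p
      _ = ((p:ℝ) ^ (e p : ℕ)) ^ γ := by
          rw [← Real.rpow_natCast ((p:ℝ)^γ) (e p), ← Real.rpow_mul (by positivity),
            mul_comm, Real.rpow_mul (by positivity), Real.rpow_natCast]
    calc (∏ p ∈ S₂, ((e p : ℝ) + 1)) ≤ ∏ p ∈ S₂, ((p:ℝ) ^ (e p : ℕ)) ^ γ := by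
          apply Finset.prod_le_prod
          · intro i _; positivity
          · exact hstep
    _ = (∏ p ∈ S₂, (p:ℝ) ^ (e p : ℕ)) ^ γ := by
          apply Real.finset_prod_rpow
          intro i _; positivity
    _ ≤ (n:ℝ) ^ γ := by
          apply Real.rpow_le_rpow (by positivity) _ (le_of_lt hγ)
          have hdvd : (∏ p ∈ S₂, p ^ (e p)) ∣ n := by
            have h1 : (∏ p ∈ S₂, p ^ (e p)) ∣ ∏ p ∈ S, p ^ (e p) :=
              Finset.prod_dvd_prod_of_subset _ _ _ (Finset.filter_subset _ _)
            have h2 : (∏ p ∈ S, p ^ (e p)) = n := by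
              have := Nat.factorization_prod_pow_eq_self hn
              rw [← this, Nat.prod_factorization_eq_prod_primeFactors]
            rwa [h2] at h1
          have := Nat.le_of_dvd hn1 hdvd
          exact_mod_cast this
  -- small part
  have hsmallprod : (∏ p ∈ S₁, ((e p : ℝ) + 1)) ≤ Cs * (n:ℝ) ^ γ := by
    set L := Nat.log 2 n with hL
    have hstep : ∀ p ∈ S₁, ((e p : ℝ) + 1) ≤ (L:ℝ) + 1 := by
      intro p hp
      obtain ⟨hpS, _⟩ := Finset.mem_filter.mp hp
      have hp2 : 2 ≤ p := (Nat.prime_of_mem_primeFactors hpS).two_le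
      have hpe : p ^ (e p) ∣ n := Nat.ordProj_dvd n p
      have h2e : 2 ^ (e p) ≤ n := le_trans (Nat.pow_le_pow_left hp2 _) (Nat.le_of_dvd hn1 hpe)
      have : e p ≤ L := (Nat.le_log_iff_pow_le one_lt_two hn).mpr h2e
      have : (e p : ℝ) ≤ (L : ℝ) := by exact_mod_cast this
      linarith
    have hprod : (∏ p ∈ S₁, ((e p : ℝ) + 1)) ≤ ((L:ℝ) + 1) ^ S₁.card := by
      calc (∏ p ∈ S₁, ((e p : ℝ) + 1)) ≤ ∏ _p ∈ S₁, ((L:ℝ) + 1) := by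
            apply Finset.prod_le_prod
            · intro i _; positivity
            · exact hstep
      _ = ((L:ℝ) + 1) ^ S₁.card := Finset.prod_const _
    have hcard : S₁.card ≤ B := by
      have : S₁ ⊆ Finset.range B := by
        intro p hp
        exact Finset.mem_range.mpr (Finset.mem_filter.mp hp).2
      calc S₁.card ≤ (Finset.range B).card := Finset.card_le_card this
      _ = B := Finset.card_range B
    have hL1 : (1:ℝ) ≤ (L:ℝ) + 1 := by
      have : (0:ℝ) ≤ (L:ℝ) := Nat.cast_nonneg _
      linarith
    have hpow : ((L:ℝ) + 1) ^ S₁.card ≤ ((L:ℝ) + 1) ^ B :=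
      pow_le_pow_right₀ hL1 hcard
    -- L + 1 ≤ (B/(γ log 2) + 1) * n^(γ/B)
    have hkey : (L:ℝ) + 1 ≤ ((B:ℝ)/(γ * Real.log 2) + 1) * (n:ℝ) ^ (γ/(B:ℝ)) := by
      have h2L : (2:ℕ) ^ L ≤ n := Nat.pow_log_le_self 2 hn
      have h2LR : (2:ℝ) ^ (L:ℕ) ≤ (n:ℝ) := by exact_mod_cast h2L
      have hlog : (L:ℝ) * Real.log 2 ≤ Real.log n := by
        calc (L:ℝ) * Real.log 2 = Real.log ((2:ℝ) ^ (L:ℕ)) := by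
              rw [Real.log_pow]
        _ ≤ Real.log n := Real.log_le_log (by positivity) h2LR
      have hlogn : Real.log n ≤ ((B:ℝ)/γ) * (n:ℝ) ^ (γ/(B:ℝ)) := by
        have hb : 0 < γ/(B:ℝ) := by positivity
        have := log_le_rpow hb hnR
        rw [show (γ/(B:ℝ))⁻¹ = (B:ℝ)/γ by field_simp] at this
        exact this
      have hlog2 : 0 < Real.log 2 := Real.log_pos one_lt_two
      have hrp1 : (1:ℝ) ≤ (n:ℝ) ^ (γ/(B:ℝ)) := Real.one_le_rpow hnR (by positivity)
      have hLb : (L:ℝ) ≤ ((B:ℝ)/(γ * Real.log 2)) * (n:ℝ) ^ (γ/(B:ℝ)) := by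
        have : (L:ℝ) ≤ Real.log n / Real.log 2 := by
          rw [le_div_iff₀ hlog2]; exact hlog
        calc (L:ℝ) ≤ Real.log n / Real.log 2 := this
        _ ≤ (((B:ℝ)/γ) * (n:ℝ) ^ (γ/(B:ℝ))) / Real.log 2 := by
            gcongr
        _ = ((B:ℝ)/(γ * Real.log 2)) * (n:ℝ) ^ (γ/(B:ℝ)) := by ring
      nlinarith
    have hfinal : ((L:ℝ) + 1) ^ B ≤ Cs * (n:ℝ) ^ γ := by
      have h0 : (0:ℝ) ≤ (L:ℝ) + 1 := by positivity
      have h1 : ((L:ℝ) + 1) ^ B ≤ (((B:ℝ)/(γ * Real.log 2) + 1) * (n:ℝ) ^ (γ/(B:ℝ))) ^ B :=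
        pow_le_pow_left₀ h0 hkey B
      have h2 : (((B:ℝ)/(γ * Real.log 2) + 1) * (n:ℝ) ^ (γ/(B:ℝ))) ^ B
          = Cs * ((n:ℝ) ^ (γ/(B:ℝ))) ^ B := by rw [mul_pow]
      have h3 : ((n:ℝ) ^ (γ/(B:ℝ))) ^ B = (n:ℝ) ^ γ := by
        rw [← Real.rpow_natCast ((n:ℝ) ^ (γ/(B:ℝ))) B, ← Real.rpow_mul (by positivity)]
        congr 1
        field_simp
      rw [h2, h3] at h1
      exact h1
    calc (∏ p ∈ S₁, ((e p : ℝ) + 1)) ≤ ((L:ℝ) + 1) ^ S₁.card := hprod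
    _ ≤ ((L:ℝ) + 1) ^ B := hpow
    _ ≤ Cs * (n:ℝ) ^ γ := hfinal
  have hpos2 : (0:ℝ) ≤ ∏ p ∈ S₂, ((e p : ℝ) + 1) := by
    apply Finset.prod_nonneg; intro i _; positivity
  have hpos1 : (0:ℝ) ≤ ∏ p ∈ S₁, ((e p : ℝ) + 1) := by
    apply Finset.prod_nonneg; intro i _; positivity
  calc (∏ p ∈ S₁, ((e p : ℝ) + 1)) * (∏ p ∈ S₂, ((e p : ℝ) + 1))
      ≤ (Cs * (n:ℝ) ^ γ) * ((n:ℝ) ^ γ) := by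
        apply mul_le_mul hsmallprod hlargeprod hpos2 (by positivity)
  _ = Cs * (n:ℝ) ^ δ := by
      rw [mul_assoc, ← Real.rpow_add (by positivity : (0:ℝ) < (n:ℝ))]
      congr 2
      rw [hγdef]; ring


/-- Number of square roots of `-1` in `ZMod m`. -/
noncomputable def sqCount (m : ℕ) : ℕ := Nat.card {s : ZMod m // s * s = -1}

lemma sqCount_prime_pow {p k : ℕ} (hp : p.Prime) (hk : 0 < k) : sqCount (p ^ k) ≤ 4 := by
  haveI : NeZero (p ^ k) := ⟨pow_ne_zero _ hp.pos.ne'⟩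
  rcases eq_or_ne p 2 with h2 | hodd
  · subst h2
    rcases Nat.lt_or_ge k 2 with hk2 | hk2
    · -- k = 1
      have hk1 : k = 1 := by omega
      subst hk1
      have h := Nat.card_le_card_of_injective
        (Subtype.val : {s : ZMod (2^1) // s * s = -1} → ZMod (2^1)) Subtype.val_injective
      have h2 : Nat.card (ZMod (2^1)) = 2 := by
        rw [Nat.card_eq_fintype_card]; simp
      rw [sqCount]; omega
    · have hdvd : (4:ℕ) ∣ 2 ^ k := by
        have h4 : (2:ℕ)^2 ∣ 2^k := pow_dvd_pow 2 hk2
        simpa using h4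
      have : IsEmpty {s : ZMod (2^k) // s * s = -1} := by
        constructor
        rintro ⟨s, hs⟩
        have hcast := congrArg (ZMod.castHom hdvd (ZMod 4)) hs
        rw [map_mul, map_neg, map_one] at hcast
        revert hcast
        generalize (ZMod.castHom hdvd (ZMod 4)) s = z
        revert z; decide
      rw [sqCount, Nat.card_of_isEmpty]; omega
  · -- p odd
    set q := p ^ k with hq
    have hpZ : Prime (p : ℤ) := Nat.prime_iff_prime_int.mp hp
    have claim : ∀ s t : ZMod q, s * s = -1 → t * t = -1 → t = s ∨ t = -s := by
      intro s t hs ht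
      set a : ℤ := (s.val : ℤ) with ha
      set b : ℤ := (t.val : ℤ) with hb
      have hsa : ((a : ℤ) : ZMod q) = s := by
        rw [ha]; push_cast; rw [ZMod.natCast_val, ZMod.cast_id]
      have hta : ((b : ℤ) : ZMod q) = t := by
        rw [hb]; push_cast; rw [ZMod.natCast_val, ZMod.cast_id]
      have hdvds : (q:ℤ) ∣ a * a + 1 := by
        apply (ZMod.intCast_zmod_eq_zero_iff_dvd _ _).mp
        push_cast [hsa, hs]
        ring
      have hdvdt : (q:ℤ) ∣ b * b + 1 := by
        apply (ZMod.intCast_zmod_eq_zero_iff_dvd _ _).mp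
        push_cast [hta, ht]
        ring
      have hdd : (q:ℤ) ∣ (b - a) * (b + a) := by
        have heq : (b - a) * (b + a) = (b * b + 1) - (a * a + 1) := by ring
        rw [heq]; exact dvd_sub hdvdt hdvds
      have hqZ : (q:ℤ) = (p:ℤ) ^ k := by push_cast [hq]; ring
      have hpq : (p:ℤ) ∣ (q:ℤ) := by rw [hqZ]; exact dvd_pow_self _ hk.ne'
      have hpa : ¬ ((p:ℤ) ∣ (b - a) ∧ (p:ℤ) ∣ (b + a)) := by
        rintro ⟨h1, h2⟩
        have h2b : (p:ℤ) ∣ 2 * b := by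
          have heq : 2 * b = (b - a) + (b + a) := by ring
          rw [heq]; exact dvd_add h1 h2
        have hp2 : ¬ (p:ℤ) ∣ 2 := by
          intro hdd2
          have hle2 : (p:ℤ) ≤ 2 := Int.le_of_dvd (by norm_num) hdd2
          have hp3 : 3 ≤ p := by
            have h2 := hp.two_le
            rcases Nat.lt_or_ge p 3 with hc | hc
            · interval_cases p
              · exact absurd rfl hodd
            · exact hc
          have hge3 : (3:ℤ) ≤ (p:ℤ) := by exact_mod_cast hp3
          omega
        have hpb : (p:ℤ) ∣ b := (hpZ.dvd_mul.mp h2b).resolve_left hp2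
        have hd1 : (p:ℤ) ∣ 1 := by
          have h3 : (p:ℤ) ∣ b * b := Dvd.dvd.mul_left hpb b
          have h4 : (p:ℤ) ∣ b * b + 1 := dvd_trans hpq hdvdt
          have heq : (1:ℤ) = (b * b + 1) - b * b := by ring
          rw [heq]; exact dvd_sub h4 h3
        exact hpZ.not_dvd_one hd1
      rw [not_and_or] at hpa
      rcases hpa with hcase | hcase
      · -- ¬ p ∣ b - a : q ∣ b + a, t = -s
        right
        have hcop : IsCoprime ((p:ℤ)) (b - a) := (hpZ.coprime_iff_not_dvd).mpr hcase
        have hcopq : IsCoprime ((q:ℤ)) (b - a) := by rw [hqZ]; exact hcop.pow_left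
        have hdvd' : (q:ℤ) ∣ b + a := by
          apply hcopq.dvd_of_dvd_mul_right
          rwa [mul_comm] at hdd
        have : ((b + a : ℤ) : ZMod q) = 0 := (ZMod.intCast_zmod_eq_zero_iff_dvd _ _).mpr hdvd'
        push_cast [hsa, hta] at this
        linear_combination this
      · -- ¬ p ∣ b + a : q ∣ b - a, t = s
        left
        have hcop : IsCoprime ((p:ℤ)) (b + a) := (hpZ.coprime_iff_not_dvd).mpr hcase
        have hcopq : IsCoprime ((q:ℤ)) (b + a) := by rw [hqZ]; exact hcop.pow_left
        have hdvd' : (q:ℤ) ∣ b - a := hcopq.dvd_of_dvd_mul_right hdd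
        have : ((b - a : ℤ) : ZMod q) = 0 := (ZMod.intCast_zmod_eq_zero_iff_dvd _ _).mpr hdvd'
        push_cast [hsa, hta] at this
        linear_combination this
    by_cases hex : ∃ s : ZMod q, s * s = -1
    · obtain ⟨s₀, hs₀⟩ := hex
      have hsub : {s : ZMod q | s * s = -1} ⊆ {s₀, -s₀} := by
        intro t ht
        rcases claim s₀ t hs₀ ht with h | h
        · exact Set.mem_insert_iff.mpr (Or.inl h)
        · exact Set.mem_insert_iff.mpr (Or.inr (Set.mem_singleton_iff.mpr h))
      calc sqCount q = Set.ncard {s : ZMod q | s * s = -1} := Nat.card_coe_set_eq _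
      _ ≤ ({s₀, -s₀} : Set (ZMod q)).ncard := Set.ncard_le_ncard hsub (Set.toFinite _)
      _ ≤ 2 := by
          calc ({s₀, -s₀} : Set (ZMod q)).ncard ≤ ({-s₀} : Set (ZMod q)).ncard + 1 :=
            Set.ncard_insert_le _ _
          _ ≤ 2 := by rw [Set.ncard_singleton]
      _ ≤ 4 := by omega
    · push_neg at hex
      have : IsEmpty {s : ZMod q // s * s = -1} := ⟨fun ⟨s, hs⟩ => hex s hs⟩
      rw [sqCount, Nat.card_of_isEmpty]; omega

lemma sqCount_mul {a b : ℕ} (ha : a ≠ 0) (hb : b ≠ 0) (h : a.Coprime b) : sqCount (a * b) ≤ sqCount a * sqCount b := by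
  haveI : NeZero a := ⟨ha⟩
  haveI : NeZero b := ⟨hb⟩
  have e := ZMod.chineseRemainder h
  rw [sqCount, sqCount, sqCount, ← Nat.card_prod]
  apply Nat.card_le_card_of_injective
    (fun s : {s : ZMod (a*b) // s * s = -1} => (⟨⟨(e s.val).1, by
      have h1 : e (s.val * s.val) = e s.val * e s.val := map_mul e _ _
      have h2 : e (-1) = -1 := by rw [map_neg, map_one]
      have := s.property
      have h3 : e (s.val * s.val) = -1 := by rw [this, h2]
      rw [h1] at h3
      have := congrArg Prod.fst h3
      simpa using this⟩,
      ⟨(e s.val).2, by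
      have h1 : e (s.val * s.val) = e s.val * e s.val := map_mul e _ _
      have h2 : e (-1) = -1 := by rw [map_neg, map_one]
      have := s.property
      have h3 : e (s.val * s.val) = -1 := by rw [this, h2]
      rw [h1] at h3
      have := congrArg Prod.snd h3
      simpa using this⟩⟩ :
        {s : ZMod a // s * s = -1} × {s : ZMod b // s * s = -1}))
    ?_
  intro s t hst
  simp only [Prod.mk.injEq, Subtype.mk.injEq] at hst
  apply Subtype.ext
  apply e.injective
  exact Prod.ext hst.1 hst.2

lemma sqCount_le (n : ℕ) : n ≠ 0 → sqCount n ≤ 4 ^ n.primeFactors.card := by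
  induction n using Nat.recOnPosPrimePosCoprime with
  | prime_pow p k hp hk =>
      intro _
      rw [Nat.primeFactors_prime_pow hk.ne' hp, Finset.card_singleton, pow_one]
      exact sqCount_prime_pow hp hk
  | zero => intro h; exact absurd rfl h
  | one =>
      intro _
      have h := Nat.card_le_card_of_injective
        (Subtype.val : {s : ZMod 1 // s * s = -1} → ZMod 1) Subtype.val_injective
      have h2 : Nat.card (ZMod 1) = 1 := by rw [Nat.card_eq_fintype_card]; simp
      rw [sqCount]
      simp only [Nat.primeFactors_one, Finset.card_empty, pow_zero]
      omega
  | coprime a b ha hb hab iha ihb =>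
      intro _
      have hane : a ≠ 0 := by omega
      have hbne : b ≠ 0 := by omega
      calc sqCount (a * b) ≤ sqCount a * sqCount b := sqCount_mul hane hbne hab
      _ ≤ 4 ^ a.primeFactors.card * 4 ^ b.primeFactors.card :=
          Nat.mul_le_mul (iha hane) (ihb hbne)
      _ = 4 ^ (a.primeFactors.card + b.primeFactors.card) := (pow_add _ _ _).symm
      _ = 4 ^ (a * b).primeFactors.card := by
          rw [Nat.Coprime.primeFactors_mul hab,
            Finset.card_union_of_disjoint (Nat.Coprime.disjoint_primeFactors hab)]



/-- All integer solutions of `a² + b² = v`. -/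
noncomputable def reps (v : ℤ) : Finset (ℤ × ℤ) :=
  (Finset.Icc (-v) v ×ˢ Finset.Icc (-v) v).filter fun ab => ab.1 ^ 2 + ab.2 ^ 2 = v

/-- Primitive solutions. -/
noncomputable def preps (v : ℤ) : Finset (ℤ × ℤ) := (reps v).filter fun ab => Int.gcd ab.1 ab.2 = 1

lemma abs_le_sq (a : ℤ) : |a| ≤ a ^ 2 := by
  rcases eq_or_ne a 0 with h | h
  · simp [h]
  · have h1 : 1 ≤ |a| := Int.one_le_abs (by simpa using h)
    nlinarith [sq_abs a, abs_nonneg a]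

lemma mem_reps {a b v : ℤ} (h : a ^ 2 + b ^ 2 = v) : (a, b) ∈ reps v := by
  have ha : |a| ≤ v := le_trans (abs_le_sq a) (by nlinarith [sq_nonneg b])
  have hb : |b| ≤ v := le_trans (abs_le_sq b) (by nlinarith [sq_nonneg a])
  rw [reps, Finset.mem_filter, Finset.mem_product, Finset.mem_Icc, Finset.mem_Icc]
  refine ⟨⟨⟨?_, ?_⟩, ?_, ?_⟩, h⟩ <;> [skip; skip; skip; skip] <;>
    first
      | (have := abs_le.mp ha; omega)
      | (have := abs_le.mp hb; omega)

lemma card_quad {α : Type*} [DecidableEq α] (a b c d : α) :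
    ({a, b, c, d} : Finset α).card ≤ 4 := by
  apply le_trans (Finset.card_insert_le _ _)
  have h2 : ({b, c, d} : Finset α).card ≤ 3 := by
    apply le_trans (Finset.card_insert_le _ _)
    have h3 : ({c, d} : Finset α).card ≤ 2 := by
      apply le_trans (Finset.card_insert_le _ _)
      simp
    omega
  omega

lemma sq_add_sq_eq_zero {x y : ℤ} (h : x ^ 2 + y ^ 2 = 0) : x = 0 ∧ y = 0 :=
  ⟨by nlinarith [sq_nonneg x, sq_nonneg y], by nlinarith [sq_nonneg x, sq_nonneg y]⟩

lemma preps_card {v : ℤ} (hv : 1 ≤ v) : (preps v).card ≤ 4 * sqCount v.toNat := by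
  set n := v.toNat with hn
  haveI : NeZero n := ⟨by omega⟩
  have hnv : ((n : ℕ) : ℤ) = v := Int.toNat_of_nonneg (by omega)
  set f : ℤ × ℤ → ZMod n := fun ab => (ab.1 : ZMod n) * (ab.2 : ZMod n)⁻¹ with hf
  have hmem : ∀ ab ∈ preps v, ab.1 ^ 2 + ab.2 ^ 2 = v ∧ IsCoprime ab.1 ab.2 := by
    intro ab hab
    rw [preps, Finset.mem_filter] at hab
    obtain ⟨h1, h2⟩ := hab
    rw [reps, Finset.mem_filter] at h1
    exact ⟨h1.2, Int.isCoprime_iff_gcd_eq_one.mpr h2⟩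
  have hunit : ∀ ab ∈ preps v, IsUnit ((ab.2 : ZMod n)) := by
    intro ab hab
    obtain ⟨hsum, hcop⟩ := hmem ab hab
    have hc1 : IsCoprime ab.2 ab.1 := hcop.symm
    have hc2 : IsCoprime ab.2 (ab.1 * ab.1) := hc1.mul_right hc1
    have hc3 : IsCoprime ab.2 (ab.1 * ab.1 + ab.2 * ab.2) := hc2.add_mul_left_right ab.2
    have hc4 : IsCoprime ab.2 v := by
      have heq : ab.1 * ab.1 + ab.2 * ab.2 = v := by rw [← hsum]; ring
      rwa [heq] at hc3
    obtain ⟨u, w, huw⟩ := hc4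
    have hcast : ((u * ab.2 + w * v : ℤ) : ZMod n) = 1 := by rw [huw]; norm_num
    have hv0 : ((v : ℤ) : ZMod n) = 0 := by
      rw [← hnv]; push_cast; exact ZMod.natCast_self n
    push_cast at hcast
    rw [hv0, mul_zero, add_zero] at hcast
    exact IsUnit.of_mul_eq_one _ (by rw [mul_comm]; exact hcast)
  have hAA : ∀ ab ∈ preps v,
      (ab.1 : ZMod n) * (ab.1 : ZMod n) = -((ab.2 : ZMod n) * (ab.2 : ZMod n)) := by
    intro ab hab
    obtain ⟨hsum, _⟩ := hmem ab hab
    have hcast : ((ab.1 ^ 2 + ab.2 ^ 2 : ℤ) : ZMod n) = 0 := by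
      rw [hsum, ← hnv]; push_cast; exact ZMod.natCast_self n
    push_cast at hcast
    linear_combination hcast
  have hsol : ∀ ab ∈ preps v, f ab * f ab = -1 := by
    intro ab hab
    have hu := hunit ab hab
    have h1 : (ab.2 : ZMod n) * (ab.2 : ZMod n)⁻¹ = 1 := ZMod.mul_inv_of_unit _ hu
    have hA := hAA ab hab
    rw [hf]
    simp only
    linear_combination ((ab.2 : ZMod n)⁻¹ * (ab.2 : ZMod n)⁻¹) * hA -
      ((ab.2 : ZMod n) * (ab.2 : ZMod n)⁻¹ + 1) * h1
  -- main counting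
  have hcount := Finset.card_le_mul_card_image (f := f) (preps v) 4 ?_
  · have himg : ((preps v).image f).card ≤ sqCount n := by
      rw [sqCount, Nat.card_eq_fintype_card, Fintype.card_subtype]
      apply Finset.card_le_card
      intro z hz
      obtain ⟨ab, habm, habz⟩ := Finset.mem_image.mp hz
      rw [Finset.mem_filter]
      exact ⟨Finset.mem_univ _, habz ▸ hsol ab habm⟩
    calc (preps v).card ≤ 4 * ((preps v).image f).card := hcount
    _ ≤ 4 * sqCount n := by omega
  · -- fibers at most 4
    intro z hz
    obtain ⟨ab', hab'm, hab'z⟩ := Finset.mem_image.mp hz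
    apply le_trans (Finset.card_le_card (t :=
      ({ab', (-ab'.1, -ab'.2), (ab'.2, -ab'.1), (-ab'.2, ab'.1)} : Finset (ℤ × ℤ))) ?_)
    · exact card_quad _ _ _ _
    intro ab hab
    obtain ⟨habm, habz⟩ := Finset.mem_filter.mp hab
    obtain ⟨a, b⟩ := ab
    obtain ⟨a', b'⟩ := ab'
    have hsum : a ^ 2 + b ^ 2 = v := by simpa using (hmem (a, b) habm).1
    have hsum' : a' ^ 2 + b' ^ 2 = v := by simpa using (hmem (a', b') hab'm).1
    have hu : IsUnit ((b : ZMod n)) := by simpa using hunit (a, b) habm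
    have hu' : IsUnit ((b' : ZMod n)) := by simpa using hunit (a', b') hab'm
    have h1 : (b : ZMod n) * (b : ZMod n)⁻¹ = 1 := ZMod.mul_inv_of_unit _ hu
    have h2 : (b' : ZMod n) * (b' : ZMod n)⁻¹ = 1 := ZMod.mul_inv_of_unit _ hu'
    have heq : (a : ZMod n) * (b : ZMod n)⁻¹ = (a' : ZMod n) * (b' : ZMod n)⁻¹ :=
      habz.trans hab'z.symm
    have he : (a : ZMod n) * (b' : ZMod n) = (a' : ZMod n) * (b : ZMod n) := by
      linear_combination ((b : ZMod n) * (b' : ZMod n)) * heq -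
        ((a : ZMod n) * (b' : ZMod n)) * h1 + ((a' : ZMod n) * (b : ZMod n)) * h2
    have hdvd : (v : ℤ) ∣ a * b' - a' * b := by
      rw [← hnv]
      apply (ZMod.intCast_zmod_eq_zero_iff_dvd _ _).mp
      push_cast
      linear_combination he
    have hid : (a * b' - a' * b) ^ 2 + (a * a' + b * b') ^ 2 = v ^ 2 := by
      linear_combination (a' ^ 2 + b' ^ 2) * hsum + v * hsum'
    clear heq he h1 h2 hu hu' habz hab'z hz hab hsol hAA hunit hmem
    clear hf f hnv habm hab'm z
    obtain ⟨c, hc⟩ := hdvd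
    have h3 : v ^ 2 * c ^ 2 + (a * a' + b * b') ^ 2 = v ^ 2 := by
      linear_combination hid - (a * b' - a' * b + v * c) * hc
    have hcases : c = 0 ∨ c = 1 ∨ c = -1 := by
      by_contra hcon
      push_neg at hcon
      have hge : 2 ≤ c ^ 2 := by
        obtain ⟨h0, h1, hm1⟩ := hcon
        have hor : c ≤ -2 ∨ 2 ≤ c := by omega
        rcases hor with h | h <;> nlinarith
      have hnn : 0 ≤ v ^ 2 * (c ^ 2 - 2) := mul_nonneg (sq_nonneg v) (by omega)
      nlinarith [sq_nonneg (a * a' + b * b'), hv]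
    simp only [Finset.mem_insert, Finset.mem_singleton, Prod.mk.injEq]
    rcases hcases with h0 | h1' | hm1
    · -- d = 0
      subst h0
      have he2 : (a * a' + b * b') ^ 2 = v ^ 2 := by linear_combination h3

      have : (a * a' + b * b' - v) * (a * a' + b * b' + v) = 0 := by linear_combination he2
      rcases mul_eq_zero.mp this with h | h
      · -- e = v : (a,b) = (a',b')
        left
        have hz1 : (a - a') ^ 2 + (b - b') ^ 2 = 0 := by linear_combination hsum + hsum' - 2 * h
        obtain ⟨e1, e2⟩ := sq_add_sq_eq_zero hz1
        omega
      · -- e = -v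
        right; left
        have hz1 : (a + a') ^ 2 + (b + b') ^ 2 = 0 := by linear_combination hsum + hsum' + 2 * h
        obtain ⟨e1, e2⟩ := sq_add_sq_eq_zero hz1
        omega
    · -- d = v
      subst h1'
      rw [mul_one] at hc
      right; right; left
      have hz1 : (a - b') ^ 2 + (b + a') ^ 2 = 0 := by
        linear_combination hsum + hsum' - 2 * hc
      obtain ⟨e1, e2⟩ := sq_add_sq_eq_zero hz1
      omega
    · -- d = -v
      subst hm1
      right; right; right
      have hz1 : (a + b') ^ 2 + (b - a') ^ 2 = 0 := by
        linear_combination hsum + hsum' + 2 * hc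
      obtain ⟨e1, e2⟩ := sq_add_sq_eq_zero hz1
      omega


lemma four_pow_primeFactors_le {n : ℕ} (hn : n ≠ 0) :
    4 ^ n.primeFactors.card ≤ n.divisors.card ^ 2 := by
  rw [Nat.card_divisors hn, ← Finset.prod_pow, ← Finset.prod_const]
  apply Finset.prod_le_prod'
  intro p hp
  have hp' := Nat.prime_of_mem_primeFactors hp
  have he : 1 ≤ n.factorization p := by
    have := (Nat.support_factorization n) ▸ hp
    have h0 : n.factorization p ≠ 0 := Finsupp.mem_support_iff.mp this
    omega
  nlinarith [he]

lemma reps_subset_biUnion {v : ℤ} (hv : 1 ≤ v) :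
    reps v ⊆ ((v.toNat.divisors.filter fun g => g ^ 2 ∣ v.toNat).biUnion
      fun g => (preps (v / (g : ℤ) ^ 2)).image fun ab => ((g : ℤ) * ab.1, (g : ℤ) * ab.2)) := by
  intro ab hab
  obtain ⟨a, b⟩ := ab
  have hsum : a ^ 2 + b ^ 2 = v := by
    have := (Finset.mem_filter.mp hab).2
    simpa using this
  set n := v.toNat with hn
  have hnv : ((n : ℕ) : ℤ) = v := Int.toNat_of_nonneg (by omega)
  have hn0 : n ≠ 0 := by omega
  set g : ℕ := Int.gcd a b with hg
  have hg0 : g ≠ 0 := by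
    intro h
    have := Int.gcd_eq_zero_iff.mp (hg ▸ h)
    obtain ⟨ha, hb⟩ := this
    rw [ha, hb] at hsum
    omega
  have hga : (g : ℤ) ∣ a := Int.gcd_dvd_left a b
  have hgb : (g : ℤ) ∣ b := Int.gcd_dvd_right a b
  have ha : (g : ℤ) * (a / (g : ℤ)) = a := Int.mul_ediv_cancel' hga
  have hb : (g : ℤ) * (b / (g : ℤ)) = b := Int.mul_ediv_cancel' hgb
  set a₁ := a / (g : ℤ) with ha₁
  set b₁ := b / (g : ℤ) with hb₁
  have hfact : (g : ℤ) ^ 2 * (a₁ ^ 2 + b₁ ^ 2) = v := by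
    calc (g : ℤ) ^ 2 * (a₁ ^ 2 + b₁ ^ 2) = ((g:ℤ) * a₁) ^ 2 + ((g:ℤ) * b₁) ^ 2 := by ring
    _ = a ^ 2 + b ^ 2 := by rw [ha, hb]
    _ = v := hsum
  have hg2v : ((g ^ 2 : ℕ) : ℤ) ∣ v := by
    push_cast
    exact ⟨a₁ ^ 2 + b₁ ^ 2, hfact.symm⟩
  have hg2n : g ^ 2 ∣ n := by
    rwa [← hnv, Int.natCast_dvd_natCast] at hg2v
  have hdiv : v / (g : ℤ) ^ 2 = a₁ ^ 2 + b₁ ^ 2 := by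
    rw [← hfact]
    exact Int.mul_ediv_cancel_left _ (by positivity)
  rw [Finset.mem_biUnion]
  refine ⟨g, ?_, ?_⟩
  · rw [Finset.mem_filter, Nat.mem_divisors]
    exact ⟨⟨dvd_trans (dvd_pow_self g (by norm_num)) hg2n, hn0⟩, hg2n⟩
  · rw [Finset.mem_image]
    refine ⟨(a₁, b₁), ?_, by simp [ha, hb]⟩
    rw [preps, Finset.mem_filter]
    constructor
    · rw [hdiv]
      exact mem_reps rfl
    · simpa using Int.gcd_div_gcd_div_gcd (i := a) (j := b) (by omega)

lemma reps_card_le {v : ℤ} (hv : 1 ≤ v) :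
    (reps v).card ≤ 4 * v.toNat.divisors.card ^ 3 := by
  set n := v.toNat with hn
  have hnv : ((n : ℕ) : ℤ) = v := Int.toNat_of_nonneg (by omega)
  have hn0 : n ≠ 0 := by omega
  calc (reps v).card
      ≤ ((n.divisors.filter fun g => g ^ 2 ∣ n).biUnion
        fun g => (preps (v / (g : ℤ) ^ 2)).image fun ab => ((g : ℤ) * ab.1, (g : ℤ) * ab.2)).card :=
        Finset.card_le_card (reps_subset_biUnion hv)
  _ ≤ ∑ g ∈ n.divisors.filter fun g => g ^ 2 ∣ n,
        ((preps (v / (g : ℤ) ^ 2)).image fun ab => ((g : ℤ) * ab.1, (g : ℤ) * ab.2)).card :=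
        Finset.card_biUnion_le
  _ ≤ ∑ g ∈ n.divisors.filter fun g => g ^ 2 ∣ n, 4 * n.divisors.card ^ 2 := by
        apply Finset.sum_le_sum
        intro g hgmem
        obtain ⟨hgdvd, hg2⟩ := Finset.mem_filter.mp hgmem
        obtain ⟨hgn, -⟩ := Nat.mem_divisors.mp hgdvd
        have hg0 : g ≠ 0 := by
          rintro rfl
          simp at hg2
          omega
        set m : ℕ := n / g ^ 2 with hm
        have hmul : g ^ 2 * m = n := Nat.mul_div_cancel' hg2
        have hm0 : m ≠ 0 := by
          rintro h
          rw [h, mul_zero] at hmul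
          omega
        have hmdvd : m ∣ n := Dvd.intro_left _ hmul
        have hdiveq : v / (g : ℤ) ^ 2 = (m : ℤ) := by
          have hcast : ((g : ℤ)) ^ 2 * (m : ℤ) = v := by
            rw [← hnv]; exact_mod_cast hmul
          rw [← hcast]
          exact Int.mul_ediv_cancel_left _ (by positivity)
        calc ((preps (v / (g : ℤ) ^ 2)).image
              fun ab => ((g : ℤ) * ab.1, (g : ℤ) * ab.2)).card
            ≤ (preps (v / (g : ℤ) ^ 2)).card := Finset.card_image_le
        _ = (preps ((m : ℕ) : ℤ)).card := by rw [hdiveq]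
        _ ≤ 4 * sqCount ((m : ℤ)).toNat := preps_card (by exact_mod_cast Nat.one_le_iff_ne_zero.mpr hm0)
        _ = 4 * sqCount m := by rw [Int.toNat_natCast]
        _ ≤ 4 * 4 ^ m.primeFactors.card := by
            have := sqCount_le m hm0
            omega
        _ ≤ 4 * 4 ^ n.primeFactors.card := by
            have hsub : m.primeFactors ⊆ n.primeFactors := Nat.primeFactors_mono hmdvd hn0
            have := Finset.card_le_card hsub
            have := Nat.pow_le_pow_right (by norm_num : 1 ≤ 4) this
            omega
        _ ≤ 4 * n.divisors.card ^ 2 := by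
            have := four_pow_primeFactors_le hn0
            omega
  _ ≤ n.divisors.card * (4 * n.divisors.card ^ 2) := by
        rw [Finset.sum_const, smul_eq_mul]
        apply Nat.mul_le_mul_right
        exact Finset.card_le_card (Finset.filter_subset _ _)
  _ = 4 * n.divisors.card ^ 3 := by ring

lemma reps_bound {δ : ℝ} (hδ : 0 < δ) :
    ∃ C : ℝ, 1 ≤ C ∧ ∀ (v : ℤ) (X : ℝ), 1 ≤ X → (v : ℝ) ≤ X →
      ((reps v).card : ℝ) ≤ C * X ^ δ := by
  obtain ⟨C₀, hC₀1, hC₀⟩ := card_divisors_le_rpow (δ := δ / 3) (by positivity)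
  refine ⟨4 * C₀ ^ 3, by nlinarith [pow_le_pow_left₀ (by norm_num : (0:ℝ) ≤ 1) hC₀1 3], ?_⟩
  intro v X hX hvX
  have hXδ : (1:ℝ) ≤ X ^ δ := Real.one_le_rpow hX (le_of_lt hδ)
  by_cases hv : 1 ≤ v
  · set n := v.toNat with hn
    have hnv : ((n : ℕ) : ℤ) = v := Int.toNat_of_nonneg (by omega)
    have hn1 : 1 ≤ n := by omega
    have hd := hC₀ n (by omega)
    have h1 : ((reps v).card : ℝ) ≤ 4 * ((n.divisors.card : ℝ)) ^ 3 := by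
      exact_mod_cast reps_card_le hv
    have hnX : ((n : ℕ) : ℝ) ≤ X := by
      have : ((n:ℕ):ℝ) = ((v:ℤ):ℝ) := by exact_mod_cast congrArg (Int.cast : ℤ → ℝ) hnv
      rw [this]; exact hvX
    have h2 : ((n.divisors.card : ℝ)) ^ 3 ≤ C₀ ^ 3 * (n : ℝ) ^ δ := by
      calc ((n.divisors.card : ℝ)) ^ 3 ≤ (C₀ * (n : ℝ) ^ (δ/3)) ^ 3 := by
            apply pow_le_pow_left₀ (by positivity) hd
      _ = C₀ ^ 3 * ((n : ℝ) ^ (δ/3)) ^ 3 := by ring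
      _ = C₀ ^ 3 * (n : ℝ) ^ δ := by
            rw [← Real.rpow_natCast ((n:ℝ) ^ (δ/3)) 3, ← Real.rpow_mul (by positivity)]
            norm_num
    have h3 : ((n : ℕ) : ℝ) ^ δ ≤ X ^ δ :=
      Real.rpow_le_rpow (by positivity) hnX (le_of_lt hδ)
    calc ((reps v).card : ℝ) ≤ 4 * ((n.divisors.card : ℝ)) ^ 3 := h1
    _ ≤ 4 * (C₀ ^ 3 * (n : ℝ) ^ δ) := by nlinarith
    _ = (4 * C₀ ^ 3) * (n : ℝ) ^ δ := by ring
    _ ≤ (4 * C₀ ^ 3) * X ^ δ := by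
        apply mul_le_mul_of_nonneg_left h3 (by positivity)
  · have hsub : reps v ⊆ {((0 : ℤ), (0 : ℤ))} := by
      intro ab hab
      obtain ⟨a, b⟩ := ab
      have hsum : a ^ 2 + b ^ 2 = v := by
        have := (Finset.mem_filter.mp hab).2
        simpa using this
      have hvle : v ≤ 0 := by omega
      have ha : a = 0 ∧ b = 0 :=
        sq_add_sq_eq_zero (by nlinarith [sq_nonneg a, sq_nonneg b])
      simp [ha.1, ha.2]
    have hcard : (reps v).card ≤ 1 := by
      calc (reps v).card ≤ ({((0:ℤ),(0:ℤ))} : Finset (ℤ × ℤ)).card := Finset.card_le_card hsub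
      _ = 1 := Finset.card_singleton _
    calc ((reps v).card : ℝ) ≤ 1 := by exact_mod_cast hcard
    _ ≤ (4 * C₀ ^ 3) * X ^ δ := by
        have hC3 : (1:ℝ) ≤ 4 * C₀ ^ 3 := by nlinarith [pow_le_pow_left₀ (by norm_num : (0:ℝ) ≤ 1) hC₀1 3]
        nlinarith



/-- Integer points in the cube `[-K,K]³` on the sphere `|x|² = n`. -/
noncomputable def trip (K : ℕ) (n : ℤ) : Finset (ℤ × ℤ × ℤ) :=
  ((Finset.Icc (-(K:ℤ)) K) ×ˢ (Finset.Icc (-(K:ℤ)) K) ×ˢ (Finset.Icc (-(K:ℤ)) K)).filter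
    fun x => x.1 ^ 2 + x.2.1 ^ 2 + x.2.2 ^ 2 = n

lemma trip_card_le {K : ℕ} {n : ℤ} {B : ℝ} (hB0 : 0 ≤ B)
    (hB : ∀ v : ℤ, v ≤ n → ((reps v).card : ℝ) ≤ B) :
    ((trip K n).card : ℝ) ≤ (2 * (K:ℝ) + 1) * B := by
  have hsub : trip K n ⊆ (Finset.Icc (-(K:ℤ)) K).biUnion fun x₁ =>
      (reps (n - x₁ ^ 2)).image fun ab => (x₁, ab.1, ab.2) := by
    intro x hx
    obtain ⟨hbox, hsum⟩ := Finset.mem_filter.mp hx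
    rw [Finset.mem_product] at hbox
    rw [Finset.mem_biUnion]
    refine ⟨x.1, hbox.1, ?_⟩
    rw [Finset.mem_image]
    exact ⟨(x.2.1, x.2.2), mem_reps (by linarith), by simp⟩
  have h1 : (trip K n).card ≤ ∑ x₁ ∈ Finset.Icc (-(K:ℤ)) K, (reps (n - x₁ ^ 2)).card := by
    calc (trip K n).card ≤ _ := Finset.card_le_card hsub
    _ ≤ ∑ x₁ ∈ Finset.Icc (-(K:ℤ)) K,
        ((reps (n - x₁ ^ 2)).image fun ab => (x₁, ab.1, ab.2)).card := Finset.card_biUnion_le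
    _ ≤ ∑ x₁ ∈ Finset.Icc (-(K:ℤ)) K, (reps (n - x₁ ^ 2)).card :=
        Finset.sum_le_sum fun i _ => Finset.card_image_le
  have hIcc : ((Finset.Icc (-(K:ℤ)) K).card : ℝ) = 2 * (K:ℝ) + 1 := by
    rw [Int.card_Icc]
    have : ((K:ℤ) + 1 - -(K:ℤ)).toNat = 2 * K + 1 := by omega
    rw [this]
    push_cast
    ring
  calc ((trip K n).card : ℝ) ≤ ∑ x₁ ∈ Finset.Icc (-(K:ℤ)) K, ((reps (n - x₁ ^ 2)).card : ℝ) := by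
        exact_mod_cast h1
  _ ≤ ∑ _x₁ ∈ Finset.Icc (-(K:ℤ)) K, B :=
      Finset.sum_le_sum fun i _ => hB _ (by nlinarith [sq_nonneg i])
  _ = ((Finset.Icc (-(K:ℤ)) K).card : ℝ) * B := by rw [Finset.sum_const, nsmul_eq_mul]
  _ = (2 * (K:ℝ) + 1) * B := by rw [hIcc]

/-- Cube of lattice points. -/
noncomputable def box3 (M : ℕ) : Finset (Fin 3 → ℤ) := Fintype.piFinset fun _ => Finset.Icc (-(M:ℤ)) M

/-- The quadratic form `|m|² + m·w`. -/
def tq (w m : Fin 3 → ℤ) : ℤ := (∑ i, m i * m i) + ∑ i, m i * w i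

lemma tq_level_card {M : ℕ} {w : Fin 3 → ℤ} (hw : ∀ i, |w i| ≤ (M:ℤ)) (s' : ℤ) :
    ((box3 M).filter fun m => tq w m = s').card
      ≤ (trip (3 * M) (4 * s' + ∑ i, w i * w i)).card := by
  apply Finset.card_le_card_of_injOn (fun m => (2 * m 0 + w 0, 2 * m 1 + w 1, 2 * m 2 + w 2))
  · intro m hm
    obtain ⟨hbox, hts⟩ := Finset.mem_filter.mp hm
    have hmi : ∀ i, -(M:ℤ) ≤ m i ∧ m i ≤ M := by
      intro i
      have := Fintype.mem_piFinset.mp hbox i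
      rw [Finset.mem_Icc] at this
      exact this
    have hwi : ∀ i, -(M:ℤ) ≤ w i ∧ w i ≤ M := fun i => abs_le.mp (hw i)
    rw [trip, Finset.mem_coe, Finset.mem_filter]
    constructor
    · rw [Finset.mem_product, Finset.mem_product]
      push_cast
      refine ⟨?_, ?_, ?_⟩ <;> rw [Finset.mem_Icc] <;>
        [(have h1 := hmi 0; have h2 := hwi 0);
         (have h1 := hmi 1; have h2 := hwi 1);
         (have h1 := hmi 2; have h2 := hwi 2)] <;>
        constructor <;> push_cast <;> omega
    · have hts' : (∑ i, m i * m i) + ∑ i, m i * w i = s' := hts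
      simp only [Fin.sum_univ_three] at hts' ⊢
      ring_nf
      ring_nf at hts'
      linear_combination 4 * hts'
  · intro m hm m' hm' heq
    simp only [Prod.mk.injEq] at heq
    obtain ⟨e0, e1, e2⟩ := heq
    have h0 : m 0 = m' 0 := by omega
    have h1 : m 1 = m' 1 := by omega
    have h2 : m 2 = m' 2 := by omega
    funext i
    fin_cases i
    · exact h0
    · exact h1
    · exact h2

lemma harmonic_bound : ∀ K : ℕ, (∑ s ∈ Finset.Icc 1 K, ((s:ℝ))⁻¹) ≤ 1 + Real.log K := by
  intro K
  induction K with
  | zero => simp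
  | succ K ih =>
    rcases Nat.eq_zero_or_pos K with h0 | hpos
    · subst h0
      norm_num
    · rw [Finset.sum_Icc_succ_top (by omega)]
      have hstep : ((K:ℝ) + 1)⁻¹ ≤ Real.log (K + 1) - Real.log K := by
        have hK0 : (0:ℝ) < K := by exact_mod_cast hpos
        have hK10 : (0:ℝ) < (K:ℝ) + 1 := by linarith
        have h := Real.log_le_sub_one_of_pos (x := (K:ℝ) / ((K:ℝ)+1)) (by positivity)
        rw [Real.log_div (ne_of_gt hK0) (ne_of_gt hK10)] at h
        have heq : (K:ℝ) / ((K:ℝ)+1) - 1 = -(((K:ℝ)+1)⁻¹) := by field_simp; ring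
        rw [heq] at h
        linarith
      have hcast : ((K:ℕ) + 1 : ℝ) = ((K+1 : ℕ) : ℝ) := by push_cast; ring
      push_cast
      push_cast at ih
      linarith



set_option maxHeartbeats 1000000 in
lemma key_sum {δ : ℝ} (hδ : 0 < δ) :
    ∃ C : ℝ, 0 < C ∧ ∀ M : ℕ, 1 ≤ M → ∀ w : Fin 3 → ℤ, (∀ i, |w i| ≤ (M:ℤ)) →
      (∑ m ∈ box3 M, if tq w m ≠ 0 then (((tq w m).natAbs : ℝ))⁻¹ else 0)
        ≤ C * (M : ℝ) ^ ((1:ℝ) + δ) := by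
  obtain ⟨C₁, hC₁1, hrep⟩ := reps_bound (δ := δ/4) (by positivity)
  set γ : ℝ := δ/4 with hγdef
  have hγ0 : 0 < γ := by positivity
  refine ⟨(14 * C₁ * 27 ^ γ) * (1 + γ⁻¹ * 6 ^ γ), by positivity, ?_⟩
  intro M hM w hw
  set MR := (M:ℝ) with hMRdef
  have hMR1 : 1 ≤ MR := by rw [hMRdef]; exact_mod_cast hM
  have hMR0 : 0 < MR := by linarith
  set X : ℝ := 27 * MR ^ 2 with hXdef
  have hX1 : 1 ≤ X := by nlinarith
  have hrepX : ∀ v : ℤ, v ≤ 27 * (M:ℤ)^2 → ((reps v).card : ℝ) ≤ C₁ * X ^ γ := by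
    intro v hv
    apply hrep v X hX1
    calc ((v:ℤ):ℝ) ≤ ((27 * (M:ℤ)^2 : ℤ) : ℝ) := by exact_mod_cast hv
    _ = X := by push_cast [hXdef, hMRdef]; ring
  -- level set bound
  have hlevel : ∀ s' : ℤ, |s'| ≤ 6 * (M:ℤ)^2 →
      ((Finset.filter (fun m => tq w m = s') (box3 M)).card : ℝ) ≤ 7 * MR * (C₁ * X ^ γ) := by
    intro s' hs'
    have h1 := tq_level_card hw s'
    have hwb : (∑ i, w i * w i) ≤ 3 * (M:ℤ)^2 := by
      have hb := fun i => abs_le.mp (hw i)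
      simp only [Fin.sum_univ_three]
      nlinarith [(hb 0).1, (hb 0).2, (hb 1).1, (hb 1).2, (hb 2).1, (hb 2).2]
    have hn : (4 * s' + ∑ i, w i * w i) ≤ 27 * (M:ℤ)^2 := by
      have habs := abs_le.mp hs'
      linarith [habs.2]
    have htrip := trip_card_le (K := 3*M) (n := 4*s' + ∑ i, w i * w i) (B := C₁ * X ^ γ)
        (by positivity) (fun v hv => hrepX v (le_trans hv hn))
    calc ((Finset.filter (fun m => tq w m = s') (box3 M)).card : ℝ)
        ≤ ((trip (3*M) (4*s' + ∑ i, w i * w i)).card : ℝ) := by exact_mod_cast h1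
    _ ≤ (2 * ((3*M : ℕ):ℝ) + 1) * (C₁ * X ^ γ) := htrip
    _ ≤ 7 * MR * (C₁ * X ^ γ) := by
        apply mul_le_mul_of_nonneg_right _ (by positivity)
        push_cast
        linarith
  -- fiberwise decomposition
  set P' := (box3 M).filter (fun m => tq w m ≠ 0) with hP'
  have hsum1 : (∑ m ∈ box3 M, if tq w m ≠ 0 then (((tq w m).natAbs : ℝ))⁻¹ else 0)
      = ∑ m ∈ P', (((tq w m).natAbs : ℝ))⁻¹ := (Finset.sum_filter _ _).symm
  set K : ℕ := 6 * M ^ 2 with hK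
  have hKZ : ((K:ℕ):ℤ) = 6 * (M:ℤ)^2 := by rw [hK]; push_cast; ring
  have hmaps : ∀ m ∈ P', (tq w m).natAbs ∈ Finset.Icc 1 K := by
    intro m hm
    obtain ⟨hbox, hne⟩ := Finset.mem_filter.mp hm
    rw [Finset.mem_Icc]
    refine ⟨Nat.one_le_iff_ne_zero.mpr (Int.natAbs_ne_zero.mpr hne), ?_⟩
    have hmi : ∀ i, -(M:ℤ) ≤ m i ∧ m i ≤ M := by
      intro i
      have := Fintype.mem_piFinset.mp hbox i
      rwa [Finset.mem_Icc] at this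
    have hwi := fun i => abs_le.mp (hw i)
    have habs : |tq w m| ≤ 6 * (M:ℤ)^2 := by
      rw [abs_le]
      simp only [tq, Fin.sum_univ_three]
      constructor <;>
        nlinarith [(hmi 0).1, (hmi 0).2, (hmi 1).1, (hmi 1).2, (hmi 2).1, (hmi 2).2,
          (hwi 0).1, (hwi 0).2, (hwi 1).1, (hwi 1).2, (hwi 2).1, (hwi 2).2,
          sq_nonneg (m 0), sq_nonneg (m 1), sq_nonneg (m 2)]
    rw [Int.abs_eq_natAbs] at habs
    have : ((tq w m).natAbs : ℤ) ≤ ((K:ℕ):ℤ) := by rw [hKZ]; exact_mod_cast habs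
    exact_mod_cast this
  have hsum2 := (Finset.sum_fiberwise_of_maps_to hmaps
    (fun m => (((tq w m).natAbs : ℝ))⁻¹)).symm
  -- per-fiber bound
  have hinner : ∀ s ∈ Finset.Icc 1 K,
      (∑ m ∈ P'.filter (fun m => (tq w m).natAbs = s), (((tq w m).natAbs : ℝ))⁻¹)
        ≤ (14 * MR * (C₁ * X ^ γ)) * ((s:ℝ))⁻¹ := by
    intro s hs
    obtain ⟨hs1, hs2⟩ := Finset.mem_Icc.mp hs
    have hcongr : (∑ m ∈ P'.filter (fun m => (tq w m).natAbs = s), (((tq w m).natAbs : ℝ))⁻¹)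
        = ((P'.filter (fun m => (tq w m).natAbs = s)).card : ℝ) * ((s:ℝ))⁻¹ := by
      rw [Finset.sum_congr rfl (fun m hm => by rw [(Finset.mem_filter.mp hm).2]),
        Finset.sum_const, nsmul_eq_mul]
    rw [hcongr]
    apply mul_le_mul_of_nonneg_right _ (by positivity)
    have hsubset : P'.filter (fun m => (tq w m).natAbs = s)
        ⊆ ((box3 M).filter fun m => tq w m = (s:ℤ)) ∪ ((box3 M).filter fun m => tq w m = -(s:ℤ)) := by
      intro m hm
      rw [Finset.mem_union, Finset.mem_filter, Finset.mem_filter]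
      obtain ⟨hmP, hms⟩ := Finset.mem_filter.mp hm
      obtain ⟨hbox, -⟩ := Finset.mem_filter.mp hmP
      rcases Int.natAbs_eq (tq w m) with h | h
      · left; exact ⟨hbox, by rw [h, hms]⟩
      · right; exact ⟨hbox, by rw [h, hms]⟩
    have hcard : ((P'.filter (fun m => (tq w m).natAbs = s)).card : ℝ)
        ≤ (((box3 M).filter fun m => tq w m = (s:ℤ)).card : ℝ)
          + (((box3 M).filter fun m => tq w m = -(s:ℤ)).card : ℝ) := by
      have := le_trans (Finset.card_le_card hsubset) (Finset.card_union_le _ _)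
      exact_mod_cast this
    have hsZ : |(s:ℤ)| ≤ 6 * (M:ℤ)^2 := by
      rw [abs_of_nonneg (by positivity)]
      rw [← hKZ]
      exact_mod_cast hs2
    have h1 := hlevel (s:ℤ) hsZ
    have h2 := hlevel (-(s:ℤ)) (by rwa [abs_neg])
    calc ((P'.filter (fun m => (tq w m).natAbs = s)).card : ℝ)
        ≤ _ + _ := hcard
    _ ≤ 7 * MR * (C₁ * X ^ γ) + 7 * MR * (C₁ * X ^ γ) := add_le_add h1 h2
    _ = 14 * MR * (C₁ * X ^ γ) := by ring
  -- put together
  have hmain : (∑ m ∈ box3 M, if tq w m ≠ 0 then (((tq w m).natAbs : ℝ))⁻¹ else 0)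
      ≤ (14 * MR * (C₁ * X ^ γ)) * (1 + Real.log K) := by
    rw [hsum1, hsum2]
    calc (∑ s ∈ Finset.Icc 1 K, ∑ m ∈ P'.filter (fun m => (tq w m).natAbs = s),
          (((tq w m).natAbs : ℝ))⁻¹)
        ≤ ∑ s ∈ Finset.Icc 1 K, (14 * MR * (C₁ * X ^ γ)) * ((s:ℝ))⁻¹ :=
        Finset.sum_le_sum hinner
    _ = (14 * MR * (C₁ * X ^ γ)) * ∑ s ∈ Finset.Icc 1 K, ((s:ℝ))⁻¹ := by
        rw [Finset.mul_sum]
    _ ≤ (14 * MR * (C₁ * X ^ γ)) * (1 + Real.log K) := by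
        apply mul_le_mul_of_nonneg_left (harmonic_bound K) (by positivity)
  -- numerics
  have hMRδ1 : 1 ≤ MR ^ (δ/2) := Real.one_le_rpow hMR1 (by positivity)
  have hXeq : X ^ γ = 27 ^ γ * MR ^ (δ/2) := by
    rw [hXdef, Real.mul_rpow (by norm_num) (by positivity)]
    congr 1
    rw [← Real.rpow_natCast MR 2, ← Real.rpow_mul (le_of_lt hMR0)]
    congr 1
    rw [hγdef]; norm_num; ring
  have hKR : ((K:ℕ):ℝ) = 6 * MR ^ 2 := by rw [hK, hMRdef]; push_cast; ring
  have hlogK : Real.log K ≤ γ⁻¹ * (6 ^ γ * MR ^ (δ/2)) := by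
    have h6 : (1:ℝ) ≤ 6 * MR ^ 2 := by nlinarith
    have := log_le_rpow hγ0 h6
    rw [hKR]
    calc Real.log (6 * MR ^ 2) ≤ γ⁻¹ * (6 * MR ^ 2) ^ γ := this
    _ = γ⁻¹ * (6 ^ γ * MR ^ (δ/2)) := by
        congr 1
        rw [Real.mul_rpow (by norm_num) (by positivity)]
        congr 1
        rw [← Real.rpow_natCast MR 2, ← Real.rpow_mul (le_of_lt hMR0)]
        congr 1
        rw [hγdef]; norm_num; ring
  have hlog2 : 1 + Real.log K ≤ (1 + γ⁻¹ * 6 ^ γ) * MR ^ (δ/2) := by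
    have hc0 : 0 ≤ γ⁻¹ * 6 ^ γ := by positivity
    nlinarith [hlogK, hMRδ1]
  have hfin : MR ^ (1:ℝ) * MR ^ (δ/2) * MR ^ (δ/2) = MR ^ ((1:ℝ) + δ) := by
    rw [← Real.rpow_add hMR0, ← Real.rpow_add hMR0]
    congr 1
    ring
  calc (∑ m ∈ box3 M, if tq w m ≠ 0 then (((tq w m).natAbs : ℝ))⁻¹ else 0)
      ≤ (14 * MR * (C₁ * X ^ γ)) * (1 + Real.log K) := hmain
  _ ≤ (14 * MR * (C₁ * X ^ γ)) * ((1 + γ⁻¹ * 6 ^ γ) * MR ^ (δ/2)) := by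
      apply mul_le_mul_of_nonneg_left hlog2 (by positivity)
  _ = ((14 * C₁ * 27 ^ γ) * (1 + γ⁻¹ * 6 ^ γ)) * (MR ^ (1:ℝ) * MR ^ (δ/2) * MR ^ (δ/2)) := by
      rw [hXeq, Real.rpow_one]
      ring
  _ = ((14 * C₁ * 27 ^ γ) * (1 + γ⁻¹ * 6 ^ γ)) * MR ^ ((1:ℝ) + δ) := by rw [hfin]

lemma lat_apply (m : Fin 3 → ℤ) (i : Fin 3) : lat m i = 2 * Real.pi * (m i : ℝ) := rfl

lemma lat_sub (a b : Fin 3 → ℤ) : lat a - lat b = lat (a - b) := by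
  ext i
  show lat a i - lat b i = _
  rw [lat_apply, lat_apply, lat_apply]
  push_cast [Pi.sub_apply]
  ring

lemma lat_add (a b : Fin 3 → ℤ) : lat a + lat b = lat (a + b) := by
  ext i
  show lat a i + lat b i = _
  rw [lat_apply, lat_apply, lat_apply]
  push_cast [Pi.add_apply]
  ring

lemma lat_inner (a b : Fin 3 → ℤ) :
    ⟪lat a, lat b⟫ = 4 * Real.pi ^ 2 * ((∑ i, a i * b i : ℤ) : ℝ) := by
  rw [PiLp.inner_apply]
  simp only [RCLike.inner_apply, starRingEnd_apply, star_trivial, lat_apply]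
  push_cast
  rw [Fin.sum_univ_three, Fin.sum_univ_three]
  ring

lemma lat_norm_sq (a : Fin 3 → ℤ) :
    ‖lat a‖ ^ 2 = 4 * Real.pi ^ 2 * ((∑ i, a i * a i : ℤ) : ℝ) := by
  rw [← real_inner_self_eq_norm_sq]
  exact lat_inner a a

lemma lat_norm_sq' (a : Fin 3 → ℤ) :
    ‖lat a‖ ^ 2 = 4 * Real.pi ^ 2 * (∑ i, ((a i : ℝ)) * ((a i : ℝ))) := by
  rw [lat_norm_sq]
  push_cast
  ring

lemma lat_coord_le (k : Fin 3 → ℤ) (i : Fin 3) : 2 * Real.pi * |(k i : ℝ)| ≤ ‖lat k‖ := by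
  have hpi : (0:ℝ) < Real.pi := Real.pi_pos
  have hsq : (2 * Real.pi * |(k i : ℝ)|) ^ 2 ≤ ‖lat k‖ ^ 2 := by
    rw [lat_norm_sq']
    have hsingle : ((k i : ℝ)) * ((k i : ℝ)) ≤ ∑ j, ((k j : ℝ)) * ((k j : ℝ)) :=
      Finset.single_le_sum (fun j _ => mul_self_nonneg ((k j : ℝ))) (Finset.mem_univ i)
    have hexp : (2 * Real.pi * |(k i : ℝ)|) ^ 2
        = 4 * Real.pi ^ 2 * (((k i : ℝ)) * ((k i : ℝ))) := by
      rw [mul_pow, mul_pow, sq_abs]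
      ring
    rw [hexp]
    apply mul_le_mul_of_nonneg_left hsingle (by positivity)
  have h1 : 0 ≤ 2 * Real.pi * |(k i : ℝ)| := by positivity
  calc 2 * Real.pi * |(k i : ℝ)| = Real.sqrt ((2 * Real.pi * |(k i : ℝ)|) ^ 2) :=
      (Real.sqrt_sq h1).symm
  _ ≤ Real.sqrt (‖lat k‖ ^ 2) := Real.sqrt_le_sqrt hsq
  _ = ‖lat k‖ := Real.sqrt_sq (norm_nonneg _)


set_option maxHeartbeats 2000000 in
theorem off_resonance_sum_estimate (ε c₁ c₂ : ℝ)
    (hε : 0 < ε) (hc₁ : 0 < c₁) (hc₁₂ : c₁ ≤ c₂) :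
    ∃ C : ℝ, 0 < C ∧ ∃ N₀ : ℕ, ∀ N : ℕ, N₀ ≤ N →
      ∀ kFσ kFν : ℝ, AdmissibleRadius N c₁ c₂ kFσ → AdmissibleRadius N c₁ c₂ kFν →
      ∀ p q : Fin 3 → ℤ, ‖lat p‖ ≤ kFσ → ‖lat q‖ ≤ kFν →
        (∑' k : Fin 3 → ℤ,
            if ‖lat k‖ ^ 2 + ⟪lat k, lat q - lat p⟫ ≠ 0 then
              (if kFσ < ‖lat p - lat k‖ ∧ kFν < ‖lat q + lat k‖ then 0 else 1) /
                |‖lat k‖ ^ 2 + ⟪lat k, lat q - lat p⟫|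
            else 0)
          ≤ C * (N : ℝ) ^ ((1 : ℝ) / 3 + ε) := by
  obtain ⟨C₀, hC₀pos, hkey⟩ := key_sum (δ := ε) hε
  have hpi : (0:ℝ) < Real.pi := Real.pi_pos
  have hpi3 : (3:ℝ) < Real.pi := Real.pi_gt_three
  have hc₂ : 0 < c₂ := lt_of_lt_of_le hc₁ hc₁₂
  set c₃ : ℝ := 2 * c₂ / Real.pi + 1 with hc₃
  have hc₃1 : 1 ≤ c₃ := by
    have h0 : 0 ≤ 2 * c₂ / Real.pi := div_nonneg (by linarith) (le_of_lt hpi)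
    rw [hc₃]
    linarith
  have hCnn : 0 ≤ (4 * Real.pi ^ 2)⁻¹ * C₀ * c₃ ^ ((1:ℝ) + ε) :=
    mul_nonneg (mul_nonneg (by positivity) (le_of_lt hC₀pos)) (Real.rpow_nonneg (by linarith) _)
  refine ⟨(4 * Real.pi ^ 2)⁻¹ * C₀ * c₃ ^ ((1:ℝ) + ε) + 1, by linarith, 1, ?_⟩
  intro N hN kFσ kFν hadσ hadν p q hp hq
  obtain ⟨-, hσl, hσu⟩ := hadσ
  obtain ⟨-, hνl, hνu⟩ := hadν
  set NR : ℝ := (N : ℝ) ^ ((1:ℝ)/3) with hNR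
  have hN1 : (1:ℝ) ≤ (N:ℝ) := by exact_mod_cast hN
  have hNR1 : 1 ≤ NR := Real.one_le_rpow hN1 (by norm_num)
  have hkFσ0 : 0 < kFσ := lt_of_lt_of_le (by positivity) hσl
  have hkFν0 : 0 < kFν := lt_of_lt_of_le (by positivity) hνl
  set M : ℕ := ⌈2 * c₂ * NR / Real.pi⌉₊ with hM
  have hNR0 : 0 < NR := by linarith
  have hxpos : 0 < 2 * c₂ * NR / Real.pi := div_pos (by nlinarith) hpi
  have hM1 : 1 ≤ M := by
    rw [hM]
    exact Nat.ceil_pos.mpr hxpos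
  have hMlb : 2 * c₂ * NR / Real.pi ≤ (M:ℝ) := by rw [hM]; exact Nat.le_ceil _
  have hMub : (M:ℝ) ≤ c₃ * NR := by
    rw [hM]
    have h1 : (⌈2 * c₂ * NR / Real.pi⌉₊ : ℝ) < 2 * c₂ * NR / Real.pi + 1 :=
      Nat.ceil_lt_add_one (le_of_lt hxpos)
    have heq : 2 * c₂ * NR / Real.pi = (2 * c₂ / Real.pi) * NR := by ring
    have h2 : 2 * c₂ * NR / Real.pi + 1 ≤ c₃ * NR := by
      rw [heq, hc₃]
      have h3 : 0 ≤ 2 * c₂ / Real.pi := div_nonneg (by linarith) (le_of_lt hpi)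
      nlinarith
    linarith
  -- coordinate bounds
  have hcoord : ∀ (r : Fin 3 → ℤ) (kF : ℝ), ‖lat r‖ ≤ kF → ∀ i,
      |(r i : ℝ)| ≤ kF / (2 * Real.pi) := by
    intro r kF hr i
    rw [le_div_iff₀ (by positivity)]
    calc |(r i:ℝ)| * (2 * Real.pi) = 2 * Real.pi * |(r i:ℝ)| := by ring
    _ ≤ ‖lat r‖ := lat_coord_le r i
    _ ≤ kF := hr
  set w : Fin 3 → ℤ := q - p with hw
  have hwM : ∀ i, |w i| ≤ (M:ℤ) := by
    intro i
    have hpc := hcoord p kFσ hp i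
    have hqc := hcoord q kFν hq i
    have hwR : |(w i : ℝ)| ≤ (M:ℝ) := by
      have hwi : ((w i : ℤ) : ℝ) = (q i : ℝ) - (p i : ℝ) := by
        rw [hw]; push_cast [Pi.sub_apply]; ring
      calc |(w i : ℝ)| ≤ |(q i : ℝ)| + |(p i : ℝ)| := by
            rw [hwi]; exact abs_sub _ _
      _ ≤ kFν / (2 * Real.pi) + kFσ / (2 * Real.pi) := add_le_add hqc hpc
      _ ≤ 2 * c₂ * NR / Real.pi := by
          rw [← add_div, div_le_div_iff₀ (by positivity) hpi]
          nlinarith [hσu, hνu]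
      _ ≤ (M:ℝ) := hMlb
    have h2 : ((|w i| : ℤ) : ℝ) ≤ ((M:ℤ) : ℝ) := by
      rw [Int.cast_abs]
      exact_mod_cast hwR
    exact_mod_cast h2
  -- denominator identity
  have hD : ∀ k : Fin 3 → ℤ, ‖lat k‖ ^ 2 + ⟪lat k, lat q - lat p⟫
      = 4 * Real.pi ^ 2 * ((tq w k : ℤ) : ℝ) := by
    intro k
    rw [lat_sub, lat_norm_sq, lat_inner, tq]
    push_cast [hw, Pi.sub_apply]
    ring
  -- support
  have hsupp : ∀ k : Fin 3 → ℤ, k ∉ box3 M →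
      (if ‖lat k‖ ^ 2 + ⟪lat k, lat q - lat p⟫ ≠ 0 then
        (if kFσ < ‖lat p - lat k‖ ∧ kFν < ‖lat q + lat k‖ then (0:ℝ) else 1) /
          |‖lat k‖ ^ 2 + ⟪lat k, lat q - lat p⟫|
      else 0) = 0 := by
    intro k hk
    have hki : ∃ i, (M:ℤ) + 1 ≤ |k i| := by
      by_contra hcon
      push_neg at hcon
      apply hk
      rw [box3, Fintype.mem_piFinset]
      intro i
      rw [Finset.mem_Icc]
      have h := abs_lt.mp (hcon i)
      omega
    obtain ⟨i, hi⟩ := hki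
    have hnorm : 2 * Real.pi * ((M:ℝ) + 1) ≤ ‖lat k‖ := by
      have hiR : (M:ℝ) + 1 ≤ |(k i : ℝ)| := by
        have : (((M:ℤ) + 1 : ℤ) : ℝ) ≤ ((|k i| : ℤ) : ℝ) := by exact_mod_cast hi
        rwa [Int.cast_abs, Int.cast_add, Int.cast_one, Int.cast_natCast] at this
      calc 2 * Real.pi * ((M:ℝ) + 1) ≤ 2 * Real.pi * |(k i : ℝ)| := by
            apply mul_le_mul_of_nonneg_left hiR (by positivity)
      _ ≤ ‖lat k‖ := lat_coord_le k i
    have h2π : 2 * c₂ * NR ≤ Real.pi * (M:ℝ) := by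
      rw [div_le_iff₀ hpi] at hMlb
      linarith [hMlb]
    have hMR1 : (1:ℝ) ≤ (M:ℝ) := by exact_mod_cast hM1
    have hchain : Real.pi * (M:ℝ) < 2 * Real.pi * ((M:ℝ) + 1) := by nlinarith
    have hbig : kFσ + ‖lat p‖ < ‖lat k‖ ∧ kFν + ‖lat q‖ < ‖lat k‖ := by
      constructor <;> linarith [hp, hq, hσu, hνu, h2π, hchain, hnorm]
    have hcond : kFσ < ‖lat p - lat k‖ ∧ kFν < ‖lat q + lat k‖ := by
      constructor
      · have h1 : ‖lat k‖ - ‖lat p‖ ≤ ‖lat p - lat k‖ := by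
          rw [norm_sub_rev]; exact norm_sub_norm_le _ _
        linarith [hbig.1]
      · have h1 : ‖lat k‖ - ‖lat q‖ ≤ ‖lat q + lat k‖ := by
          have h2 := norm_sub_norm_le (lat k) (-(lat q))
          rw [norm_neg, sub_neg_eq_add, add_comm] at h2
          linarith
        linarith [hbig.2]
    by_cases hD0 : ‖lat k‖ ^ 2 + ⟪lat k, lat q - lat p⟫ ≠ 0
    · rw [if_pos hD0, if_pos hcond, zero_div]
    · rw [if_neg hD0]
  -- pointwise comparison
  have hcomp : ∀ k : Fin 3 → ℤ,
      (if ‖lat k‖ ^ 2 + ⟪lat k, lat q - lat p⟫ ≠ 0 then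
        (if kFσ < ‖lat p - lat k‖ ∧ kFν < ‖lat q + lat k‖ then (0:ℝ) else 1) /
          |‖lat k‖ ^ 2 + ⟪lat k, lat q - lat p⟫|
      else 0)
      ≤ (4 * Real.pi ^ 2)⁻¹ * (if tq w k ≠ 0 then (((tq w k).natAbs : ℝ))⁻¹ else 0) := by
    intro k
    by_cases ht : tq w k ≠ 0
    · have htR : ((tq w k : ℤ) : ℝ) ≠ 0 := by exact_mod_cast ht
      have hD0 : ‖lat k‖ ^ 2 + ⟪lat k, lat q - lat p⟫ ≠ 0 := by
        rw [hD k]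
        intro h
        rcases mul_eq_zero.mp h with h' | h'
        · nlinarith [Real.pi_pos]
        · exact htR h'
      rw [if_pos hD0, if_pos ht]
      have hnat1 : (1:ℝ) ≤ ((tq w k).natAbs : ℝ) := by
        exact_mod_cast Nat.one_le_iff_ne_zero.mpr (Int.natAbs_ne_zero.mpr ht)
      have habs : |‖lat k‖ ^ 2 + ⟪lat k, lat q - lat p⟫|
          = 4 * Real.pi ^ 2 * ((tq w k).natAbs : ℝ) := by
        rw [hD k, abs_mul, abs_of_pos (by positivity : (0:ℝ) < 4 * Real.pi ^ 2),
          Nat.cast_natAbs, Int.cast_abs]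
      rw [habs]
      have hpos : (0:ℝ) < 4 * Real.pi ^ 2 * ((tq w k).natAbs : ℝ) := by nlinarith [Real.pi_pos]
      have hnum : (if kFσ < ‖lat p - lat k‖ ∧ kFν < ‖lat q + lat k‖ then (0:ℝ) else 1) ≤ 1 := by
        split <;> norm_num
      calc (if kFσ < ‖lat p - lat k‖ ∧ kFν < ‖lat q + lat k‖ then (0:ℝ) else 1) /
            (4 * Real.pi ^ 2 * ((tq w k).natAbs : ℝ))
          ≤ 1 / (4 * Real.pi ^ 2 * ((tq w k).natAbs : ℝ)) := by gcongr
      _ = (4 * Real.pi ^ 2)⁻¹ * (((tq w k).natAbs : ℝ))⁻¹ := by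
          rw [one_div, mul_inv]
    · push_neg at ht
      have hD0 : ¬ (‖lat k‖ ^ 2 + ⟪lat k, lat q - lat p⟫ ≠ 0) := by
        rw [hD k, ht]
        norm_num
      rw [if_neg hD0, if_neg (by push_neg; exact ht)]
      norm_num
  -- final chain
  rw [tsum_eq_sum (fun k hk => hsupp k hk)]
  have hNRnn : (0:ℝ) ≤ (N:ℝ) := by positivity
  have hrpow : ((M:ℝ)) ^ ((1:ℝ) + ε) ≤ (c₃ * NR) ^ ((1:ℝ) + ε) :=
    Real.rpow_le_rpow (by positivity) hMub (by linarith)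
  have hNRpow : NR ^ ((1:ℝ) + ε) ≤ (N:ℝ) ^ ((1:ℝ)/3 + ε) := by
    rw [hNR, ← Real.rpow_mul hNRnn]
    apply Real.rpow_le_rpow_of_exponent_le hN1
    linarith
  calc (∑ k ∈ box3 M,
        if ‖lat k‖ ^ 2 + ⟪lat k, lat q - lat p⟫ ≠ 0 then
          (if kFσ < ‖lat p - lat k‖ ∧ kFν < ‖lat q + lat k‖ then (0:ℝ) else 1) /
            |‖lat k‖ ^ 2 + ⟪lat k, lat q - lat p⟫|
        else 0)
      ≤ ∑ k ∈ box3 M, (4 * Real.pi ^ 2)⁻¹ *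
          (if tq w k ≠ 0 then (((tq w k).natAbs : ℝ))⁻¹ else 0) :=
      Finset.sum_le_sum (fun k _ => hcomp k)
  _ = (4 * Real.pi ^ 2)⁻¹ * ∑ k ∈ box3 M,
        (if tq w k ≠ 0 then (((tq w k).natAbs : ℝ))⁻¹ else 0) := by
      rw [← Finset.mul_sum]
  _ ≤ (4 * Real.pi ^ 2)⁻¹ * (C₀ * ((M:ℝ)) ^ ((1:ℝ) + ε)) := by
      apply mul_le_mul_of_nonneg_left (hkey M hM1 w hwM) (by positivity)
  _ ≤ (4 * Real.pi ^ 2)⁻¹ * (C₀ * (c₃ * NR) ^ ((1:ℝ) + ε)) := by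
      apply mul_le_mul_of_nonneg_left _ (by positivity)
      exact mul_le_mul_of_nonneg_left hrpow (le_of_lt hC₀pos)
  _ = (4 * Real.pi ^ 2)⁻¹ * C₀ * c₃ ^ ((1:ℝ) + ε) * NR ^ ((1:ℝ) + ε) := by
      rw [Real.mul_rpow (by linarith) (by linarith)]
      ring
  _ ≤ (4 * Real.pi ^ 2)⁻¹ * C₀ * c₃ ^ ((1:ℝ) + ε) * (N:ℝ) ^ ((1:ℝ)/3 + ε) := by
      apply mul_le_mul_of_nonneg_left hNRpow
      exact mul_nonneg (mul_nonneg (by positivity) (le_of_lt hC₀pos))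
        (Real.rpow_nonneg (by linarith) _)
  _ ≤ ((4 * Real.pi ^ 2)⁻¹ * C₀ * c₃ ^ ((1:ℝ) + ε) + 1) * (N:ℝ) ^ ((1:ℝ)/3 + ε) := by
      have h0 : (0:ℝ) ≤ (N:ℝ) ^ ((1:ℝ)/3 + ε) := Real.rpow_nonneg hNRnn _
      nlinarith
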